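/- arXiv:1107.4644 — 4 statements merged into one kernel-verified Lean document; each statement's English description precedes it below -/
import Mathlib

section
/- The Gaussian densities of the shrinking sphere-cylinders are strictly decreasing in the sphere dimension: for every integer $k \ge 1$, $$d_{k+1} < d_k,$$ where $d_k = (k/(2e))^{k/2} \cdot 2\sqrt{\pi}/\Gamma((k+1)/2)$. -/
/-!
Put `x = k / 2`, so that `d_k = (x / e) ^ x * 2 √π / Γ(x + 1/2)` and `d_{k+1} < d_k` reads
`(x + 1/2) log (x + 1/2) - x log x - 1/2 < log (Γ(x + 1) / Γ(x + 1/2))`.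
The left side is at most `(1 + log (x + 1/4)) / 2`, because the derivative `1 + log t` of `t log t`
is strictly concave. The right side exceeds `log (x + 1/4) / 2` (Kershaw's inequality): by the
functional equation `(Γ(x + 1) / Γ(x + 1/2))² / (x + 1/4)` strictly decreases under `x ↦ x + 1`,
and by log-convexity of `Γ` it is at least `x / (x + 1/4)`, which tends to `1`.
-/

open Real Set

namespace Real

theorem add_mul_log_add_sub_sub_mul_log_sub_lt {u s : ℝ} (hs : 0 < s) (hsu : s < u) :
    (u + s) * log (u + s) - (u - s) * log (u - s) < 2 * s * (1 + log u) := by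
  let H : ℝ → ℝ := fun t ↦ 2 * t * (1 + log u) - (u + t) * log (u + t) + (u - t) * log (u - t)
  have hH : ∀ t ∈ Icc 0 s, HasDerivAt H (log u + log u - (log (u + t) + log (u - t))) t := by
    intro t ht
    have hplus := (hasDerivAt_mul_log (by linarith [ht.1] : u + t ≠ 0)).comp t
      ((hasDerivAt_id t).const_add u)
    have hminus := (hasDerivAt_mul_log (by linarith [ht.2] : u - t ≠ 0)).comp t
      ((hasDerivAt_id t).const_sub u)
    exact ((((hasDerivAt_id t).const_mul 2).mul_const (1 + log u)).sub hplus).add hminus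
      |>.congr_deriv (by ring)
  have hmono : StrictMonoOn H (Icc 0 s) := by
    refine strictMonoOn_of_deriv_pos (convex_Icc 0 s)
      (fun t ht ↦ (hH t ht).continuousAt.continuousWithinAt) fun t ht ↦ ?_
    rw [interior_Icc] at ht
    rw [(hH t (Ioo_subset_Icc_self ht)).deriv, sub_pos, ← log_mul (by linarith [ht.1])
      (by linarith [ht.2]), ← log_mul (by linarith) (by linarith)]
    exact log_lt_log (by nlinarith [ht.1, ht.2]) (by nlinarith [ht.1])
  have := hmono ⟨le_rfl, hs.le⟩ ⟨hs.le, le_rfl⟩ hs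
  simp only [H, add_zero, sub_zero, mul_zero, zero_mul] at this
  linarith

theorem le_sq_Gamma_add_one_div_Gamma_add_half {x : ℝ} (hx : 0 < x) :
    x ≤ (Gamma (x + 1) / Gamma (x + 1 / 2)) ^ 2 := by
  have hpos := Gamma_pos_of_pos hx
  have hpos' := Gamma_pos_of_pos (by linarith : 0 < x + 1 / 2)
  have hconv := Gamma_mul_add_mul_le_rpow_Gamma_mul_rpow_Gamma hx (by linarith : 0 < x + 1)
    (by norm_num : (0:ℝ) < 1 / 2) (by norm_num : (0:ℝ) < 1 / 2) (by norm_num)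
  rw [show 1 / 2 * x + 1 / 2 * (x + 1) = x + 1 / 2 by ring, ← mul_rpow hpos.le
    (Gamma_pos_of_pos (by linarith : 0 < x + 1)).le, ← sqrt_eq_rpow, Gamma_add_one hx.ne',
    le_sqrt' hpos'] at hconv
  rw [Gamma_add_one hx.ne', div_pow, le_div_iff₀ (by positivity)]
  nlinarith

theorem lt_sq_Gamma_add_one_div_Gamma_add_half {x : ℝ} (hx : 0 < x) :
    x + 1 / 4 < (Gamma (x + 1) / Gamma (x + 1 / 2)) ^ 2 := by
  let G : ℝ → ℝ := fun y ↦ (Gamma (y + 1) / Gamma (y + 1 / 2)) ^ 2 / (y + 1 / 4)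
  have hstep : ∀ y, 0 < y → G (y + 1) < G y := by
    intro y hy
    have ha := Gamma_pos_of_pos (by linarith : 0 < y + 1)
    have hb := Gamma_pos_of_pos (by linarith : 0 < y + 1 / 2)
    have hfactor :
        G (y + 1) = G y * ((y + 1) ^ 2 * (y + 1 / 4) / ((y + 1 / 2) ^ 2 * (y + 5 / 4))) := by
      simp only [G]
      rw [Gamma_add_one (by linarith : y + 1 ≠ 0), add_right_comm,
        Gamma_add_one (by linarith : y + 1 / 2 ≠ 0)]
      field_simp
      ring
    rw [hfactor]
    exact mul_lt_of_lt_one_right (by positivity) ((div_lt_one (by positivity)).2 (by nlinarith))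
  have hanti : ∀ n : ℕ, G (x + 1 + n) ≤ G (x + 1) := by
    intro n
    induction n with
    | zero => simp
    | succ n ih =>
      rw [Nat.cast_succ, ← add_assoc]
      exact (hstep _ (by positivity)).le.trans ih
  have hlower : ∀ n : ℕ, (n : ℝ) / (n + 1 / 4) ≤ G (x + 1 + n) := by
    intro n
    have hy : 0 < x + 1 + n := by positivity
    refine le_trans ?_ (div_le_div_of_nonneg_right (le_sq_Gamma_add_one_div_Gamma_add_half hy)
      (by positivity))
    rw [div_le_div_iff₀ (by positivity) (by positivity)]
    nlinarith
  have hG : 1 ≤ G (x + 1) :=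
    le_of_tendsto' (tendsto_natCast_div_add_atTop (1 / 4 : ℝ)) fun n ↦ (hlower n).trans (hanti n)
  have := hG.trans_lt (hstep x hx)
  simp only [G] at this
  rwa [one_lt_div (by linarith)] at this

theorem add_half_mul_log_add_half_sub_mul_log_sub_half_lt_log_Gamma_div {x : ℝ} (hx : 0 < x) :
    (x + 1 / 2) * log (x + 1 / 2) - x * log x - 1 / 2 <
      log (Gamma (x + 1) / Gamma (x + 1 / 2)) := by
  have hmul_log := add_mul_log_add_sub_sub_mul_log_sub_lt (by norm_num : (0:ℝ) < 1 / 4)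
    (by linarith : 1 / 4 < x + 1 / 4)
  rw [show x + 1 / 4 + 1 / 4 = x + 1 / 2 by ring, show x + 1 / 4 - 1 / 4 = x by ring] at hmul_log
  have hGamma := log_lt_log (by positivity) (lt_sq_Gamma_add_one_div_Gamma_add_half hx)
  rw [log_pow, Nat.cast_ofNat] at hGamma
  linarith

end Real

/-- `gaussianDensity (k / 2)` is the density `d_k` of the shrinking `k`-sphere. -/
noncomputable def gaussianDensity (x : ℝ) : ℝ :=
  (x / exp 1) ^ x * (2 * √π / Gamma (x + 1 / 2))

theorem gaussianDensity_add_half_lt {x : ℝ} (hx : 0 < x) :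
    gaussianDensity (x + 1 / 2) < gaussianDensity x := by
  have hpow : ∀ y, 0 < y → (y / exp 1) ^ y = exp (y * (log y - 1)) := fun y hy ↦ by
    rw [rpow_def_of_pos (by positivity), log_div hy.ne' (exp_pos 1).ne', log_exp, mul_comm]
  have ha := Gamma_pos_of_pos (by linarith : 0 < x + 1)
  have hb := Gamma_pos_of_pos (by linarith : 0 < x + 1 / 2)
  have key : exp ((x + 1 / 2) * (log (x + 1 / 2) - 1)) * Gamma (x + 1 / 2) <
      exp (x * (log x - 1)) * Gamma (x + 1) := by
    rw [show (x + 1 / 2) * (log (x + 1 / 2) - 1) =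
      x * (log x - 1) + ((x + 1 / 2) * log (x + 1 / 2) - x * log x - 1 / 2) by ring,
      exp_add, mul_assoc]
    refine mul_lt_mul_of_pos_left ?_ (exp_pos _)
    rw [← lt_div_iff₀ hb, ← lt_log_iff_exp_lt (by positivity)]
    exact add_half_mul_log_add_half_sub_mul_log_sub_half_lt_log_Gamma_div hx
  simp only [gaussianDensity]
  rw [hpow _ (by positivity), hpow x hx, add_assoc, show (1 / 2 + 1 / 2 : ℝ) = 1 by norm_num,
    mul_div_assoc', mul_div_assoc', div_lt_div_iff₀ ha hb]
  nlinarith [mul_lt_mul_of_pos_right key (by positivity : (0:ℝ) < 2 * √π)]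

/-- The Gaussian densities `d_k = (k/(2e))^{k/2} · 2√π / Γ((k+1)/2)` of the shrinking
sphere-cylinders are strictly decreasing in the sphere dimension: `d_{k+1} < d_k`
for every `k ≥ 1`. -/
theorem gaussian_densities_strictly_decreasing (d : ℕ → ℝ)
    (hd : ∀ k : ℕ, d k = ((k : ℝ) / (2 * Real.exp 1)) ^ ((k : ℝ) / 2) *
      (2 * Real.sqrt Real.pi / Real.Gamma (((k : ℝ) + 1) / 2)))
    (k : ℕ) (hk : 1 ≤ k) :
    d (k + 1) < d k := by
  have hd_half : ∀ j : ℕ, d j = gaussianDensity (j / 2) := fun j ↦ by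
    rw [hd, gaussianDensity, div_div, add_div]
  rw [hd_half, hd_half, Nat.cast_succ, add_div]
  exact gaussianDensity_add_half_lt (div_pos (Nat.cast_pos.2 hk) two_pos)
end

section
/- Let $0 \le k \le d$ be integers and let $S \subseteq \mathbb{R}^d$ be a set with $\mathcal{H}^{d-k}(S) = 0$. Let $F : \mathbb{R}^k \to \mathbb{R}^d$ be a $C^\infty$ map. Then for Lebesgue-almost every $v \in \mathbb{R}^d$, the translated map $F(\cdot) + v$ satisfies $F(x) + v \notin S$ for every $x$ in the closed unit ball $\mathbb{B}^k$ of $\mathbb{R}^k$. -/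
/-!
Cover the ball `B` of radius `R` in `E ≅ ℝ^k` by `≲ r^{-k}` balls of radius `r`. If `f` is
`K`-Lipschitz on `B` and `t ⊆ V ≅ ℝ^d` has diameter `≤ r`, then every `v` with
`(f '' B + v) ∩ t ≠ ∅` lies within `(1 + K) r` of one of the points `p - f y` (`p ∈ t` fixed, `y` a
centre of the cover), so `vol (t - f '' B) ≲ r^{-k} r^d = r^{d-k}`. Thus the outer measure
`A ↦ vol (A - f '' B)` is dominated by a multiple of `μH[d - k]`, and the set of bad translations
`S - f '' B` is null.
-/

open MeasureTheory Metric Set Filter Topology Module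
open scoped ENNReal NNReal Pointwise

lemma ENNReal.le_mul_pow_of_forall_le_mul_pow {a c x : ℝ≥0∞} {n : ℕ} (hc : c ≠ ∞) (hx : x ≤ 1)
    (h : ∀ r : ℝ≥0, 0 < r → r ≤ 1 → x ≤ r → a ≤ c * r ^ n) : a ≤ c * x ^ n := by
  lift x to ℝ≥0 using ne_top_of_le_ne_top one_ne_top hx
  rcases eq_or_ne x 0 with rfl | hx0
  · have hlim : Tendsto (fun r : ℝ≥0 => c * (r : ℝ≥0∞) ^ n) (𝓝[>] 0) (𝓝 (c * (0 : ℝ≥0) ^ n)) :=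
      ((ENNReal.continuous_const_mul hc).comp
        ((ENNReal.continuous_pow n).comp ENNReal.continuous_coe)).continuousWithinAt.tendsto
    refine ge_of_tendsto hlim ?_
    filter_upwards [Ioo_mem_nhdsGT zero_lt_one] with r hr
    exact h r hr.1 hr.2.le (by simp)
  · exact h x (pos_iff_ne_zero.2 hx0) (by exact_mod_cast hx) le_rfl

def MeasureTheory.OuterMeasure.pointwiseSub {G : Type*} [AddGroup G] (μ : OuterMeasure G)
    (K : Set G) : OuterMeasure G where
  measureOf A := μ (A - K)
  empty := by simp
  mono h := μ.mono (sub_subset_sub_right h)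
  iUnion_nat s _ := by simpa only [iUnion_sub] using measure_iUnion_le _

lemma MeasureTheory.OuterMeasure.le_mul_hausdorffMeasure {X : Type*} [EMetricSpace X]
    [MeasurableSpace X] [BorelSpace X] (μ : OuterMeasure X) {c r : ℝ≥0∞} {d : ℝ} (hc0 : c ≠ 0)
    (hc : c ≠ ∞) (hr : 0 < r) (h : ∀ s, ediam s ≤ r → μ s ≤ c * ediam s ^ d) (s : Set X) :
    μ s ≤ c * μH[d] s := by
  have := OuterMeasure.le_mkMetric (c • fun r : ℝ≥0∞ => r ^ d) μ r hr h
  rw [OuterMeasure.mkMetric_smul _ hc hc0, ← Measure.mkMetric_toOuterMeasure] at this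
  exact this s

namespace Metric

variable {E : Type*} [NormedAddCommGroup E] [NormedSpace ℝ E] [FiniteDimensional ℝ E]

lemma IsSeparated.encard_mul_measure_closedBall_le [MeasurableSpace E] [BorelSpace E]
    (μ : Measure E) [μ.IsAddHaarMeasure] {ε : ℝ≥0} (hε : 0 < ε) {C : Set E}
    (hC : IsSeparated ε C) {x : E} {R : ℝ} (hCR : C ⊆ closedBall x R) :
    C.encard * μ (closedBall 0 (ε / 2)) ≤ μ (closedBall x (R + ε / 2)) := by
  have hdisj : C.PairwiseDisjoint fun c => closedBall c (ε / 2) := by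
    intro a ha b hb hab
    have hab' : (ε : ℝ≥0∞) < edist a b := hC ha hb hab
    rw [edist_nndist, ENNReal.coe_lt_coe] at hab'
    have : (ε : ℝ) < dist a b := hab'
    exact closedBall_disjoint_closedBall (by linarith)
  have hcount : C.Countable := hdisj.countable_of_nonempty_interior fun c _ =>
    ⟨c, mem_interior_iff_mem_nhds.2 (closedBall_mem_nhds c (by positivity))⟩
  calc C.encard * μ (closedBall 0 (ε / 2))
      = ∑' c : C, μ (closedBall (c : E) (ε / 2)) := by
        simp_rw [Measure.addHaar_closedBall_center, ENNReal.tsum_set_const]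
    _ = μ (⋃ c ∈ C, closedBall c (ε / 2)) :=
        (measure_biUnion hcount hdisj fun _ _ => measurableSet_closedBall).symm
    _ ≤ μ (closedBall x (R + ε / 2)) := by
        refine measure_mono (iUnion₂_subset fun c hc => closedBall_subset_closedBall' ?_)
        linarith [mem_closedBall.1 (hCR hc)]

lemma packingNumber_closedBall_le {ε : ℝ≥0} (hε : 0 < ε) (x : E) {R : ℝ} (hR : 0 ≤ R) :
    (packingNumber ε (closedBall x R) : ℝ≥0∞) ≤
      ENNReal.ofReal ((1 + 2 * R / ε) ^ finrank ℝ E) := by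
  borelize E
  let μ : Measure E := Measure.addHaar
  have hball : μ (ball 0 1) ≠ 0 := (measure_ball_pos μ 0 one_pos).ne'
  have hball' : μ (ball 0 1) ≠ ∞ := measure_ball_lt_top.ne
  simp only [packingNumber, ENat.toENNReal_iSup, iSup_le_iff]
  intro C hCR hC
  have hvol := hC.encard_mul_measure_closedBall_le μ hε hCR
  rw [Measure.addHaar_closedBall μ _ (by positivity),
    Measure.addHaar_closedBall μ _ (by positivity), ← mul_assoc, ENNReal.mul_le_mul_iff_left hball hball'] at hvol
  have hpos : 0 < ((ε : ℝ) / 2) ^ finrank ℝ E := by positivity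
  calc (C.encard : ℝ≥0∞)
      ≤ ENNReal.ofReal ((R + ε / 2) ^ finrank ℝ E) /
          ENNReal.ofReal ((ε / 2) ^ finrank ℝ E) :=
        ENNReal.le_div_iff_mul_le (Or.inl (by simpa using hpos)) (Or.inl ENNReal.ofReal_ne_top)
          |>.2 hvol
    _ = ENNReal.ofReal ((1 + 2 * R / ε) ^ finrank ℝ E) := by
        rw [← ENNReal.ofReal_div_of_pos hpos, ← div_pow]
        congr 2
        field_simp
        ring

end Metric

section LipschitzImage

variable {E V : Type*} [NormedAddCommGroup V] [MeasurableSpace V] [BorelSpace V]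

lemma measure_sub_image_le_of_isCover [PseudoMetricSpace E] (μ : Measure V) [μ.IsAddHaarMeasure]
    {f : E → V} {K r : ℝ≥0} {A P : Set E} (hf : LipschitzOnWith K f A) (hPA : P ⊆ A)
    (hPfin : P.Finite) (hP : IsCover r A P) {t : Set V} (ht : ediam t ≤ r) :
    μ (t - f '' A) ≤ P.encard * μ (closedBall 0 ((1 + K) * r)) := by
  rcases t.eq_empty_or_nonempty with rfl | ⟨p, hp⟩
  · simp
  have hsub : t - f '' A ⊆ ⋃ y ∈ P, closedBall (p - f y) ((1 + K) * r) := by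
    rintro _ ⟨s, hs, _, ⟨x, hx, rfl⟩, rfl⟩
    obtain ⟨y, hy, hxy⟩ := hP hx
    refine mem_iUnion₂.2 ⟨y, hy, ?_⟩
    have hsp : dist s p ≤ r :=
      (edist_le_coe.1 ((edist_le_ediam_of_mem hs hp).trans ht))
    have hfxy : dist (f x) (f y) ≤ K * r :=
      (hf.dist_le_mul x hx y (hPA hy)).trans (by gcongr; exact edist_le_coe.1 hxy)
    rw [mem_closedBall, dist_eq_norm]
    calc ‖s - f x - (p - f y)‖ = ‖(s - p) - (f x - f y)‖ := by congr 1; abel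
      _ ≤ ‖s - p‖ + ‖f x - f y‖ := norm_sub_le _ _
      _ ≤ (1 + K) * r := by rw [← dist_eq_norm, ← dist_eq_norm]; linarith
  calc μ (t - f '' A) ≤ ∑' y : P, μ (closedBall (p - f y) ((1 + K) * r)) :=
        (measure_mono hsub).trans (measure_biUnion_le μ hPfin.countable _)
    _ = P.encard * μ (closedBall 0 ((1 + K) * r)) := by
        simp_rw [Measure.addHaar_closedBall_center, ENNReal.tsum_set_const]

variable [NormedAddCommGroup E] [NormedSpace ℝ E] [FiniteDimensional ℝ E] [NormedSpace ℝ V]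
  [FiniteDimensional ℝ V] (μ : Measure V) [μ.IsAddHaarMeasure] {f : E → V} {K : ℝ≥0} {x₀ : E}
  {R : ℝ}

lemma measure_sub_image_closedBall_le (hR : 0 ≤ R) (hf : LipschitzOnWith K f (closedBall x₀ R))
    (hdim : finrank ℝ E ≤ finrank ℝ V) {r : ℝ≥0} (hr0 : 0 < r) (hr1 : r ≤ 1) {t : Set V}
    (ht : ediam t ≤ r) :
    μ (t - f '' closedBall x₀ R) ≤
      ENNReal.ofReal ((1 + 2 * R) ^ finrank ℝ E * (1 + K) ^ finrank ℝ V) * μ (ball 0 1) *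
        r ^ (finrank ℝ V - finrank ℝ E) := by
  set k := finrank ℝ E
  set d := finrank ℝ V
  set P := minimalCover r (closedBall x₀ R)
  have hpack := packingNumber_closedBall_le hr0 x₀ hR
  have hcov : coveringNumber r (closedBall x₀ R) ≠ ⊤ := by
    refine ne_top_of_le_ne_top (fun h => ?_) (coveringNumber_le_packingNumber _ _)
    simp [h] at hpack
  have hP : (P.encard : ℝ≥0∞) ≤ ENNReal.ofReal ((1 + 2 * R / r) ^ k) := by
    rw [encard_minimalCover hcov]
    exact (ENat.toENNReal_le.2 (coveringNumber_le_packingNumber _ _)).trans hpack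
  calc μ (t - f '' closedBall x₀ R)
      ≤ P.encard * μ (closedBall 0 ((1 + K) * r)) :=
        measure_sub_image_le_of_isCover μ hf minimalCover_subset finite_minimalCover
          (isCover_minimalCover hcov) ht
    _ ≤ ENNReal.ofReal ((1 + 2 * R / r) ^ k) *
          (ENNReal.ofReal (((1 + K) * r) ^ d) * μ (ball 0 1)) := by
        rw [Measure.addHaar_closedBall μ _ (by positivity)]
        gcongr
    _ ≤ ENNReal.ofReal ((1 + 2 * R) ^ k * (1 + K) ^ d * r ^ (d - k)) * μ (ball 0 1) := by
        rw [← mul_assoc, ← ENNReal.ofReal_mul (by positivity)]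
        gcongr ENNReal.ofReal ?_ * _
        have hrd : (r : ℝ) ^ d = r ^ (d - k) * r ^ k := by rw [← pow_add, Nat.sub_add_cancel hdim]
        calc (1 + 2 * R / r) ^ k * ((1 + K) * r) ^ d
            = (r + 2 * R) ^ k * (1 + K) ^ d * r ^ (d - k) := by
              have hrR : (1 + 2 * R / r) * r = r + 2 * R := by field_simp
              rw [mul_pow, hrd, ← hrR, mul_pow]
              ring
          _ ≤ (1 + 2 * R) ^ k * (1 + K) ^ d * r ^ (d - k) := by
              gcongr; exact_mod_cast hr1
    _ = _ := by
        rw [ENNReal.ofReal_mul (by positivity), ENNReal.ofReal_pow NNReal.zero_le_coe,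
          ENNReal.ofReal_coe_nnreal]
        ring

theorem measure_sub_image_closedBall_eq_zero (hR : 0 ≤ R)
    (hf : LipschitzOnWith K f (closedBall x₀ R)) (hdim : finrank ℝ E ≤ finrank ℝ V) {S : Set V}
    (hS : μH[(finrank ℝ V : ℝ) - finrank ℝ E] S = 0) :
    μ (S - f '' closedBall x₀ R) = 0 := by
  set c := ENNReal.ofReal ((1 + 2 * R) ^ finrank ℝ E * (1 + K) ^ finrank ℝ V) * μ (ball 0 1)
  have hc0 : c ≠ 0 :=
    mul_ne_zero (ENNReal.ofReal_pos.2 (by positivity)).ne' (measure_ball_pos μ 0 one_pos).ne'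
  have hc : c ≠ ∞ := ENNReal.mul_ne_top ENNReal.ofReal_ne_top measure_ball_lt_top.ne
  have hsmall : ∀ t : Set V, ediam t ≤ 1 →
      μ (t - f '' closedBall x₀ R) ≤ c * ediam t ^ ((finrank ℝ V : ℝ) - finrank ℝ E) := by
    intro t ht
    rw [← Nat.cast_sub hdim, ENNReal.rpow_natCast]
    exact ENNReal.le_mul_pow_of_forall_le_mul_pow hc ht fun r hr0 hr1 htr =>
      measure_sub_image_closedBall_le μ hR hf hdim hr0 hr1 htr
  have hle := (OuterMeasure.pointwiseSub μ.toOuterMeasure (f '' closedBall x₀ R))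
    |>.le_mul_hausdorffMeasure hc0 hc one_pos hsmall S
  rwa [hS, mul_zero, nonpos_iff_eq_zero] at hle

end LipschitzImage

/-- General position by translation: if `S ⊆ ℝ^d` has vanishing `(d-k)`-dimensional
Hausdorff measure and `F : ℝ^k → ℝ^d` is `C^∞`, then for Lebesgue-almost every
`v ∈ ℝ^d` the translated map `F(·) + v` misses `S` on the closed unit ball. -/
theorem general_position_ae_translation (k d : ℕ) (hkd : k ≤ d)
    (S : Set (EuclideanSpace ℝ (Fin d))) (hS : μH[(d : ℝ) - (k : ℝ)] S = 0)
    (F : EuclideanSpace ℝ (Fin k) → EuclideanSpace ℝ (Fin d))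
    (hF : ContDiff ℝ (⊤ : ℕ∞) F) :
    ∀ᵐ v ∂(volume : Measure (EuclideanSpace ℝ (Fin d))),
      ∀ x ∈ Metric.closedBall (0 : EuclideanSpace ℝ (Fin k)) 1, F x + v ∉ S := by
  obtain ⟨K, hK⟩ := (hF.of_le (by exact_mod_cast le_top)).locallyLipschitz.locallyLipschitzOn
    |>.exists_lipschitzOnWith_of_compact (isCompact_closedBall _ _)
  have hnull := measure_sub_image_closedBall_eq_zero volume zero_le_one hK
    (by simpa using hkd) (S := S) (by simpa using hS)
  refine measure_mono_null (fun v hv => ?_) hnull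
  obtain ⟨x, hx, hxS⟩ : ∃ x ∈ closedBall 0 1, F x + v ∈ S := by simpa using hv
  exact ⟨_, hxS, _, mem_image_of_mem F hx, add_sub_cancel_left _ _⟩
end

section
/- Let $0 \le k \le d$ be integers and let $S \subseteq \mathbb{R}^d$ be a set with $\mathcal{H}^{d-k}(S) = 0$. Then the smooth maps from $\mathbb{B}^k$ to $\mathbb{R}^d$ whose image is disjoint from $S$ are dense among all smooth maps in the uniform norm: for every $C^\infty$ map $F : \mathbb{R}^k \to \mathbb{R}^d$ and every $\varepsilon > 0$ there exists a $C^\infty$ map $G : \mathbb{R}^k \to \mathbb{R}^d$ such that $G(\mathbb{B}^k) \cap S = \emptyset$ and $\sup_{x \in \mathbb{B}^k} |G(x) - F(x)| < \varepsilon$. -/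
/-!
A translate `F + v` misses `S` on the ball `B` exactly when `v ∉ S - F '' B`, so it suffices that
`S - F '' B` is Lebesgue-null. Being a Lipschitz image of a `k`-dimensional ball, `F '' B` is
covered by `O(r⁻ᵏ)` balls of radius `O(r)`; hence for a set `t` of diameter at most `r`, the
set `t - F '' B` has volume `O(rᵈ⁻ᵏ)`. Summing over covers of `S` with arbitrarily small
`∑ (diam tₙ)ᵈ⁻ᵏ` shows that `S - F '' B` is null.
-/

open MeasureTheory Metric Set Module Function Filter
open scoped ENNReal NNReal Pointwise Topology

theorem Metric.IsSeparated.encard_mul_measure_closedBall_le_s5 {E : Type*} [NormedAddCommGroup E]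
    [MeasurableSpace E] [BorelSpace E] (μ : Measure E) [μ.IsAddHaarMeasure] {C : Set E} {x : E}
    {R : ℝ} {ε : ℝ≥0} (hC : IsSeparated ε C) (hCR : C ⊆ closedBall x R) :
    C.encard * μ (closedBall 0 (ε / 2)) ≤ μ (closedBall x (R + ε / 2)) := by
  have hdisj : Pairwise (Disjoint on fun c : C => closedBall (c : E) (ε / 2)) := by
    rintro ⟨a, ha⟩ ⟨b, hb⟩ hab
    refine Set.disjoint_left.2 fun z hza hzb => ?_
    have hlt : (ε : ℝ≥0∞) < edist a b := hC ha hb (Subtype.coe_ne_coe.2 hab)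
    rw [edist_nndist, ENNReal.coe_lt_coe, ← NNReal.coe_lt_coe, coe_nndist] at hlt
    linarith [dist_triangle_left a b z, mem_closedBall.1 hza, mem_closedBall.1 hzb]
  have hsub : ⋃ c : C, closedBall (c : E) (ε / 2) ⊆ closedBall x (R + ε / 2) :=
    iUnion_subset fun c => closedBall_subset_closedBall' (by linarith [mem_closedBall.1 (hCR c.2)])
  calc C.encard * μ (closedBall 0 (ε / 2)) = ∑' c : C, μ (closedBall (c : E) (ε / 2)) := by
        simp only [Measure.addHaar_closedBall_center, ENNReal.tsum_set_const]
    _ ≤ μ (⋃ c : C, closedBall (c : E) (ε / 2)) :=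
        tsum_meas_le_meas_iUnion_of_disjoint μ (fun _ => measurableSet_closedBall) hdisj
    _ ≤ μ (closedBall x (R + ε / 2)) := measure_mono hsub

section Packing

variable {E : Type*} [NormedAddCommGroup E] [NormedSpace ℝ E] [FiniteDimensional ℝ E]

theorem Metric.IsSeparated.encard_mul_pow_le {C : Set E} {x : E} {R : ℝ} {ε : ℝ≥0}
    (hC : IsSeparated ε C) (hCR : C ⊆ closedBall x R) :
    C.encard * (ε : ℝ≥0∞) ^ finrank ℝ E ≤ ENNReal.ofReal (2 * R + ε) ^ finrank ℝ E := by
  rcases C.eq_empty_or_nonempty with rfl | ⟨c, hc⟩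
  · simp
  have hR : 0 ≤ R := dist_nonneg.trans (hCR hc)
  borelize E
  have hvol := hC.encard_mul_measure_closedBall_le_s5 Measure.addHaar hCR
  rw [Measure.addHaar_closedBall _ _ (by positivity),
    Measure.addHaar_closedBall _ _ (by positivity), ← mul_assoc,
    ENNReal.mul_le_mul_iff_left (measure_ball_pos _ 0 one_pos).ne' measure_ball_lt_top.ne] at hvol
  calc C.encard * (ε : ℝ≥0∞) ^ finrank ℝ E
      = 2 ^ finrank ℝ E * (C.encard * ENNReal.ofReal ((ε / 2 : ℝ) ^ finrank ℝ E)) := by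
        rw [ENNReal.ofReal_pow (by positivity), ← mul_assoc, mul_comm _ (C.encard : ℝ≥0∞),
          mul_assoc, ← mul_pow, ENNReal.ofReal_div_of_pos two_pos, ENNReal.ofReal_coe_nnreal]
        simp [ENNReal.mul_div_cancel two_ne_zero ENNReal.ofNat_ne_top]
    _ ≤ 2 ^ finrank ℝ E * ENNReal.ofReal ((R + ε / 2) ^ finrank ℝ E) := by gcongr
    _ = ENNReal.ofReal (2 * R + ε) ^ finrank ℝ E := by
        rw [ENNReal.ofReal_pow (by positivity), ← ENNReal.ofReal_ofNat 2, ← mul_pow,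
          ← ENNReal.ofReal_mul zero_le_two]
        ring_nf

theorem Metric.coveringNumber_closedBall_mul_pow_le (x : E) (R : ℝ) {ε : ℝ≥0} (hε : ε ≠ 0) :
    (coveringNumber ε (closedBall x R) : ℝ≥0∞) * (ε : ℝ≥0∞) ^ finrank ℝ E ≤
      ENNReal.ofReal (2 * R + ε) ^ finrank ℝ E := by
  have hfin : packingNumber ε (closedBall x R) ≠ ⊤ := by
    obtain ⟨N, -, hNfin, hN⟩ :=
      exists_finite_isCover_of_isCompact (ε := ε / 2) (by positivity) (isCompact_closedBall x R)
    refine ne_top_of_le_ne_top hNfin.encard_lt_top.ne ?_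
    calc packingNumber ε (closedBall x R) = packingNumber (2 * (ε / 2)) (closedBall x R) := by
          rw [mul_div_cancel₀ _ two_ne_zero]
      _ ≤ externalCoveringNumber (ε / 2) (closedBall x R) :=
          packingNumber_two_mul_le_externalCoveringNumber _ _
      _ ≤ N.encard := hN.externalCoveringNumber_le_encard
  calc (coveringNumber ε (closedBall x R) : ℝ≥0∞) * (ε : ℝ≥0∞) ^ finrank ℝ E
      ≤ (maximalSeparatedSet ε (closedBall x R)).encard * (ε : ℝ≥0∞) ^ finrank ℝ E := by
        rw [encard_maximalSeparatedSet hfin]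
        gcongr
        exact coveringNumber_le_packingNumber _ _
    _ ≤ ENNReal.ofReal (2 * R + ε) ^ finrank ℝ E :=
        isSeparated_maximalSeparatedSet.encard_mul_pow_le maximalSeparatedSet_subset

end Packing

theorem measure_sub_image_le_encard_mul {X E : Type*} [PseudoMetricSpace X] [NormedAddCommGroup E]
    [MeasurableSpace E] [BorelSpace E] (μ : Measure E) [μ.IsAddHaarMeasure] {F : X → E}
    {A P : Set X} {L r : ℝ≥0} (hF : LipschitzOnWith L F A) (hPA : P ⊆ A) (hP : P.Countable)
    (hcover : IsCover r A P) {t : Set E} (ht : ediam t ≤ r) :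
    μ (t - F '' A) ≤ P.encard * μ (closedBall 0 ((1 + L) * r)) := by
  rcases t.eq_empty_or_nonempty with rfl | ⟨y, hy⟩
  · simp
  have hsub : t - F '' A ⊆ ⋃ p ∈ P, closedBall (y - F p) ((1 + L) * r) := by
    rintro _ ⟨s, hs, _, ⟨a, ha, rfl⟩, rfl⟩
    obtain ⟨p, hp, hap⟩ := hcover ha
    have hsy : dist s y ≤ r := by
      rw [← coe_nndist, NNReal.coe_le_coe, ← edist_le_coe]
      exact (edist_le_ediam_of_mem hs hy).trans ht
    have hFap : dist (F a) (F p) ≤ L * r := by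
      refine (hF.dist_le_mul a ha p (hPA hp)).trans (mul_le_mul_of_nonneg_left ?_ L.coe_nonneg)
      rw [← coe_nndist, NNReal.coe_le_coe, ← edist_le_coe]
      exact hap
    refine mem_iUnion₂.2 ⟨p, hp, ?_⟩
    rw [dist_eq_norm] at hsy hFap
    rw [mem_closedBall, dist_eq_norm]
    calc ‖(s - F a) - (y - F p)‖ = ‖(s - y) - (F a - F p)‖ := by congr 1; abel
      _ ≤ ‖s - y‖ + ‖F a - F p‖ := norm_sub_le _ _
      _ ≤ (1 + L) * r := by linarith
  calc μ (t - F '' A) ≤ μ (⋃ p ∈ P, closedBall (y - F p) ((1 + L) * r)) := measure_mono hsub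
    _ ≤ ∑' p : P, μ (closedBall (y - F p) ((1 + L) * r)) := measure_biUnion_le μ hP _
    _ = P.encard * μ (closedBall 0 ((1 + L) * r)) := by
        simp only [Measure.addHaar_closedBall_center, ENNReal.tsum_set_const]

theorem ENNReal.le_mul_rpow_of_forall_lt {a C δ : ℝ≥0∞} {s : ℝ} (hC : C ≠ ∞) (hδ : δ < 1)
    (h : ∀ r : ℝ≥0, δ < r → r < 1 → a ≤ C * (r : ℝ≥0∞) ^ s) : a ≤ C * δ ^ s := by
  lift δ to ℝ≥0 using ne_top_of_lt hδ
  have hlim : Tendsto (fun r : ℝ≥0 => C * (r : ℝ≥0∞) ^ s) (𝓝[>] δ) (𝓝 (C * (δ : ℝ≥0∞) ^ s)) :=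
    (((ENNReal.continuous_const_mul hC).comp
      (ENNReal.continuous_rpow_const.comp ENNReal.continuous_coe)).tendsto δ).mono_left
      nhdsWithin_le_nhds
  refine ge_of_tendsto hlim ?_
  filter_upwards [Ioo_mem_nhdsGT (by exact_mod_cast hδ : δ < 1)] with r hr
  exact h r (by exact_mod_cast hr.1) (by exact_mod_cast hr.2)

theorem measure_sub_eq_zero_of_hausdorffMeasure_eq_zero {E : Type*} [EMetricSpace E] [AddGroup E]
    [MeasurableSpace E] [BorelSpace E] (μ : Measure E) (K : Set E) {s : ℝ} {C : ℝ≥0∞}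
    (hC : C ≠ ∞)
    (h : ∀ (t : Set E) (r : ℝ≥0), 0 < r → r < 1 → ediam t ≤ r → μ (t - K) ≤ C * (r : ℝ≥0∞) ^ s)
    {S : Set E} (hS : μH[s] S = 0) : μ (S - K) = 0 := by
  let ν : OuterMeasure E :=
    { measureOf := fun t => μ (t - K)
      empty := by simp
      mono := fun h => measure_mono (sub_subset_sub_right h)
      iUnion_nat := fun t _ => by simpa only [iUnion_sub] using measure_iUnion_le _ }
  have hν : ν ≤ OuterMeasure.mkMetric fun δ => C * δ ^ s :=
    OuterMeasure.le_mkMetric _ ν (1 / 2) (by norm_num) fun t ht =>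
      ENNReal.le_mul_rpow_of_forall_lt hC
        (ht.trans_lt (ENNReal.half_lt_self one_ne_zero ENNReal.one_ne_top))
        fun r hr hr1 => h t r (ENNReal.coe_pos.1 (hr.trans_le' bot_le)) hr1 hr.le
  -- `C + 1` rather than `C`, since `mkMetric_mono_smul` needs a nonzero constant.
  have hsmul : OuterMeasure.mkMetric (fun δ => C * δ ^ s) ≤
      (C + 1) • (μH[s] : Measure E).toOuterMeasure := by
    rw [Measure.hausdorffMeasure, Measure.mkMetric_toOuterMeasure]
    refine OuterMeasure.mkMetric_mono_smul (ENNReal.add_ne_top.2 ⟨hC, ENNReal.one_ne_top⟩)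
      (by simp) (Eventually.of_forall fun δ => ?_)
    exact mul_le_mul_left le_self_add _
  refine le_antisymm ?_ bot_le
  calc μ (S - K) = ν S := rfl
    _ ≤ (C + 1) * μH[s] S := (hν.trans hsmul) S
    _ = 0 := by rw [hS, mul_zero]

theorem measure_sub_image_eq_zero_of_coveringNumber_le {X E : Type*} [PseudoMetricSpace X]
    [NormedAddCommGroup E] [NormedSpace ℝ E] [FiniteDimensional ℝ E] [MeasurableSpace E]
    [BorelSpace E] (μ : Measure E) [μ.IsAddHaarMeasure] {F : X → E} {A : Set X} {L : ℝ≥0}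
    {k : ℕ} {M : ℝ≥0∞} (hF : LipschitzOnWith L F A) (hk : k ≤ finrank ℝ E) (hM : M ≠ ∞)
    (hA : ∀ r : ℝ≥0, 0 < r → r < 1 → (coveringNumber r A : ℝ≥0∞) * (r : ℝ≥0∞) ^ k ≤ M)
    {S : Set E} (hS : μH[(finrank ℝ E : ℝ) - k] S = 0) : μ (S - F '' A) = 0 := by
  refine measure_sub_eq_zero_of_hausdorffMeasure_eq_zero μ _
    (C := M * μ (closedBall 0 (1 + L)))
    (ENNReal.mul_ne_top hM measure_closedBall_lt_top.ne) (fun t r hr hr1 ht => ?_) hS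
  have hcover : coveringNumber r A ≠ ⊤ := by
    intro htop
    have := hA r hr hr1
    rw [htop, ENat.toENNReal_top, ENNReal.top_mul (by positivity)] at this
    exact hM (top_le_iff.1 this)
  obtain ⟨P, hPA, hPfin, hP, hPcard⟩ := exists_set_encard_eq_coveringNumber hcover
  have hr_pow : (r : ℝ≥0∞) ^ finrank ℝ E =
      (r : ℝ≥0∞) ^ k * (r : ℝ≥0∞) ^ ((finrank ℝ E : ℝ) - k) := by
    rw [← Nat.cast_sub hk, ENNReal.rpow_natCast, ← pow_add, Nat.add_sub_cancel' hk]
  calc μ (t - F '' A) ≤ P.encard * μ (closedBall 0 ((1 + L) * r)) :=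
        measure_sub_image_le_encard_mul μ hF hPA hPfin.countable hP ht
    _ = (coveringNumber r A : ℝ≥0∞) * (r : ℝ≥0∞) ^ k * μ (closedBall 0 (1 + L)) *
          (r : ℝ≥0∞) ^ ((finrank ℝ E : ℝ) - k) := by
        rw [mul_comm (1 + (L : ℝ)),
          Measure.addHaar_closedBall_mul μ 0 r.coe_nonneg (by positivity),
          ENNReal.ofReal_pow r.coe_nonneg, ENNReal.ofReal_coe_nnreal, hr_pow, hPcard]
        ring
    _ ≤ M * μ (closedBall 0 (1 + L)) * (r : ℝ≥0∞) ^ ((finrank ℝ E : ℝ) - k) := by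
        gcongr
        exact hA r hr hr1

/-- Smooth maps of the closed unit ball `𝔹^k` into `ℝ^d` whose image misses a set
`S` of vanishing `(d-k)`-dimensional Hausdorff measure are dense in the uniform norm
among all smooth maps. -/
theorem general_position_dense (k d : ℕ) (hkd : k ≤ d)
    (S : Set (EuclideanSpace ℝ (Fin d))) (hS : μH[(d : ℝ) - (k : ℝ)] S = 0)
    (F : EuclideanSpace ℝ (Fin k) → EuclideanSpace ℝ (Fin d))
    (hF : ContDiff ℝ (⊤ : ℕ∞) F) (ε : ℝ) (hε : 0 < ε) :
    ∃ G : EuclideanSpace ℝ (Fin k) → EuclideanSpace ℝ (Fin d),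
      ContDiff ℝ (⊤ : ℕ∞) G ∧
      (∀ x ∈ Metric.closedBall (0 : EuclideanSpace ℝ (Fin k)) 1, G x ∉ S) ∧
      (∀ x ∈ Metric.closedBall (0 : EuclideanSpace ℝ (Fin k)) 1, ‖G x - F x‖ < ε) := by
  obtain ⟨L, hL⟩ := LocallyLipschitzOn.exists_lipschitzOnWith_of_compact (isCompact_closedBall 0 1)
    (hF.of_le (by exact_mod_cast le_top) : ContDiff ℝ 1 F).locallyLipschitz.locallyLipschitzOn
  have hball_cover : ∀ r : ℝ≥0, 0 < r → r < 1 →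
      (coveringNumber r (closedBall (0 : EuclideanSpace ℝ (Fin k)) 1) : ℝ≥0∞) * (r : ℝ≥0∞) ^ k ≤
        ENNReal.ofReal 3 ^ k := fun r hr hr1 => by
    have hr1' : (r : ℝ) < 1 := by exact_mod_cast hr1
    have h := coveringNumber_closedBall_mul_pow_le (0 : EuclideanSpace ℝ (Fin k)) 1 hr.ne'
    rw [finrank_euclideanSpace_fin] at h
    exact h.trans (by gcongr; linarith)
  have hbad : volume (S - F '' closedBall 0 1) = 0 :=
    measure_sub_image_eq_zero_of_coveringNumber_le volume hL (by simpa using hkd)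
      (ENNReal.pow_ne_top ENNReal.ofReal_ne_top) hball_cover (by simpa using hS)
  obtain ⟨v, hv, hvS⟩ : ∃ v ∈ ball (0 : EuclideanSpace ℝ (Fin d)) ε, v ∉ S - F '' closedBall 0 1 :=
    not_subset.1 fun h => (measure_ball_pos volume 0 hε).ne' (measure_mono_null h hbad)
  refine ⟨fun x => F x + v, hF.add contDiff_const, fun x hx hxS => hvS ?_, fun x _ => ?_⟩
  · exact ⟨_, hxS, _, mem_image_of_mem F hx, add_sub_cancel_left _ _⟩
  · simpa using hv
end

section
/- Let $X$ be a metric space, let $a < b$ be real numbers, and let $t \in [a,b] \mapsto K(t)$ be a family of compact subsets of $X$ such that $K(t) \subseteq K(T)$ whenever $a \le T \le t \le b$, such that the frontiers $M(t) := \partial K(t)$ for $t \in [a,b]$ are pairwise disjoint, and such that $\bigcup_{t \in [a,b]} M(t) = K(a) \setminus \mathrm{interior}(K(b))$. Then there exists a function $\tau : K(a) \to \mathbb{R}$, continuous on $K(a)$, such that $M(t) = \{x \in K(a) : \tau(x) = t\}$ for every $t \in [a,b)$, and $K(t) = \{x \in K(a) : \tau(x) \ge t\}$ for every $t \in [a,b]$.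 -/
/-- The arrival-time function of a nested family of compact sets: if `t ∈ [a,b] ↦ K(t)`
is a decreasing family of compact subsets of a metric space whose frontiers
`M(t) = ∂K(t)` are pairwise disjoint and together fill `K(a) \ interior (K(b))`, then
there is a function `τ`, continuous on `K(a)`, with `M(t) = {x ∈ K(a) : τ(x) = t}`
for `t ∈ [a,b)` and `K(t) = {x ∈ K(a) : τ(x) ≥ t}` for `t ∈ [a,b]`. -/
theorem arrival_time_function {X : Type*} [MetricSpace X]
    (a b : ℝ) (hab : a < b) (K : ℝ → Set X)
    (hcpt : ∀ t ∈ Set.Icc a b, IsCompact (K t))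
    (hnest : ∀ T t : ℝ, a ≤ T → T ≤ t → t ≤ b → K t ⊆ K T)
    (hdisj : ∀ t ∈ Set.Icc a b, ∀ T ∈ Set.Icc a b, t ≠ T →
      Disjoint (frontier (K t)) (frontier (K T)))
    (hunion : (⋃ t ∈ Set.Icc a b, frontier (K t)) = K a \ interior (K b)) :
    ∃ τ : X → ℝ, ContinuousOn τ (K a) ∧
      (∀ t ∈ Set.Ico a b, frontier (K t) = {x ∈ K a | τ x = t}) ∧
      (∀ t ∈ Set.Icc a b, K t = {x ∈ K a | t ≤ τ x}) := by
  classical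
  have hclosed : ∀ t ∈ Set.Icc a b, IsClosed (K t) := fun t ht => (hcpt t ht).isClosed
  set τ : X → ℝ := fun x =>
    if h : ∃ t, t ∈ Set.Icc a b ∧ x ∈ frontier (K t) then h.choose else b with hτdef
  have hspec : ∀ x (h : ∃ t, t ∈ Set.Icc a b ∧ x ∈ frontier (K t)),
      τ x ∈ Set.Icc a b ∧ x ∈ frontier (K (τ x)) := by
    intro x h
    simp only [hτdef, dif_pos h]
    exact ⟨h.choose_spec.1, h.choose_spec.2⟩
  have huniq : ∀ x, ∀ t ∈ Set.Icc a b, x ∈ frontier (K t) → τ x = t := by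
    intro x t ht hx
    obtain ⟨hm, hf⟩ := hspec x ⟨t, ht, hx⟩
    by_contra hne
    exact Set.disjoint_left.1 (hdisj _ hm t ht hne) hf hx
  have hub : ∀ x, τ x ≤ b := by
    intro x
    by_cases h : ∃ t, t ∈ Set.Icc a b ∧ x ∈ frontier (K t)
    · exact (hspec x h).1.2
    · simp only [hτdef, dif_neg h]; exact le_rfl
  -- main characterization
  have hmain : ∀ t ∈ Set.Icc a b, ∀ x, x ∈ K t ↔ x ∈ K a ∧ t ≤ τ x := by
    intro t ht x
    constructor
    · intro hx
      have hKa : x ∈ K a := hnest a t le_rfl ht.1 ht.2 hx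
      refine ⟨hKa, ?_⟩
      by_cases h : ∃ s, s ∈ Set.Icc a b ∧ x ∈ frontier (K s)
      · obtain ⟨hm, hf⟩ := hspec x h
        by_contra hlt
        push_neg at hlt
        have hxfr : x ∈ frontier (K t) := by
          refine ⟨subset_closure hx, fun hint => hf.2 ?_⟩
          exact interior_mono (hnest (τ x) t hm.1 hlt.le ht.2) hint
        exact absurd (huniq x t ht hxfr) (ne_of_lt hlt)
      · simp only [hτdef, dif_neg h]; exact ht.2
    · rintro ⟨hxa, hle⟩
      by_cases h : ∃ s, s ∈ Set.Icc a b ∧ x ∈ frontier (K s)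
      · obtain ⟨hm, hf⟩ := hspec x h
        have hxK : x ∈ K (τ x) := (hclosed _ hm).frontier_subset hf
        exact hnest t (τ x) ht.1 hle hm.2 hxK
      · have hnotin : x ∉ K a \ interior (K b) := by
          rw [← hunion]
          intro hmem
          simp only [Set.mem_iUnion] at hmem
          obtain ⟨s, hs, hxs⟩ := hmem
          exact h ⟨s, hs, hxs⟩
        have : x ∈ interior (K b) := by
          by_contra hni
          exact hnotin ⟨hxa, hni⟩
        exact hnest t b ht.1 ht.2 le_rfl (interior_subset this)
  refine ⟨τ, ?_, ?_, ?_⟩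
  · -- continuity
    intro x hx
    have hax : a ≤ τ x := ((hmain a ⟨le_rfl, hab.le⟩ x).1 hx).2
    rw [ContinuousWithinAt]
    rw [tendsto_order]
    constructor
    · intro c hc
      by_cases hca : c < a
      · filter_upwards [self_mem_nhdsWithin] with y hy
        exact hca.trans_le ((hmain a ⟨le_rfl, hab.le⟩ y).1 hy).2
      · push_neg at hca
        set t := (c + τ x) / 2 with htdef
        have h1 : c < t := by simp only [htdef]; linarith
        have h2 : t < τ x := by simp only [htdef]; linarith
        have ht : t ∈ Set.Icc a b := ⟨hca.trans h1.le, (h2.trans_le (hub x)).le⟩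
        have hxt : x ∈ K t := (hmain t ht x).2 ⟨hx, h2.le⟩
        have hnf : x ∉ frontier (K t) := fun hf =>
          absurd (huniq x t ht hf) (by linarith)
        have hint : x ∈ interior (K t) := by
          by_contra hni
          exact hnf ((hclosed t ht).frontier_eq ▸ ⟨hxt, hni⟩)
        filter_upwards [mem_nhdsWithin_of_mem_nhds (isOpen_interior.mem_nhds hint)] with y hy
        have hyKt : y ∈ K t := interior_subset hy
        exact h1.trans_le ((hmain t ht y).1 hyKt).2
    · intro c hc
      by_cases hcb : b < c
      · filter_upwards [self_mem_nhdsWithin] with y _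
        exact (hub y).trans_lt hcb
      · push_neg at hcb
        set t := (τ x + c) / 2 with htdef
        have h1 : τ x < t := by simp only [htdef]; linarith
        have h2 : t < c := by simp only [htdef]; linarith
        have ht : t ∈ Set.Icc a b := ⟨hax.trans h1.le, (h2.trans_le hcb).le⟩
        have hxt : x ∉ K t := fun h => absurd ((hmain t ht x).1 h).2 (by linarith)
        filter_upwards [mem_nhdsWithin_of_mem_nhds
          ((hclosed t ht).isOpen_compl.mem_nhds hxt), self_mem_nhdsWithin] with y hy hya
        have : ¬ t ≤ τ y := fun hle => hy ((hmain t ht y).2 ⟨hya, hle⟩)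
        linarith [lt_of_not_ge this, h2]
  · -- frontier description
    intro t ht
    ext x
    simp only [Set.mem_setOf_eq]
    constructor
    · intro hf
      have htm : t ∈ Set.Icc a b := ⟨ht.1, ht.2.le⟩
      have hxK : x ∈ K t := (hclosed t htm).frontier_subset hf
      exact ⟨hnest a t le_rfl ht.1 ht.2.le hxK, huniq x t htm hf⟩
    · rintro ⟨hxa, hτt⟩
      by_cases h : ∃ s, s ∈ Set.Icc a b ∧ x ∈ frontier (K s)
      · obtain ⟨hm, hf⟩ := hspec x h
        rwa [hτt] at hf
      · exfalso
        have : τ x = b := by simp only [hτdef, dif_neg h]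
        rw [hτt] at this
        exact absurd this (ne_of_lt ht.2)
  · -- sublevel description
    intro t ht
    ext x
    simpa only [Set.mem_setOf_eq] using hmain t ht x
end
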